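/- Let M be an ergodic quantum channel and M' any quantum channel on the same finite-dimensional Hilbert space. Then for every p ∈ (0,1], the channel M_p = p M + (1-p) M' is ergodic, and its fixed point state ρ*,p satisfies ρ*,p = π ρ* + (1-π) σ for some π ∈ (0,1] and some density matrix σ, where ρ* is the fixed point of M. -/

import Mathlib

open Matrix
open scoped ComplexOrder

noncomputable section

abbrev Mat (d : ℕ) := Matrix (Fin d) (Fin d) ℂ

/-- `K` is a Kraus representation of the linear map `Φ`. -/
def IsKrausRep {d : ℕ} (Φ : Mat d →ₗ[ℂ] Mat d) {n : ℕ} (K : Fin n → Mat d) : Prop :=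
  (∀ A, Φ A = ∑ i, K i * A * (K i)ᴴ) ∧ ∑ i, (K i)ᴴ * K i = 1

/-- A quantum channel: completely positive trace-preserving map, i.e. admitting a Kraus
representation with the normalization condition. -/
def IsCPTP {d : ℕ} (Φ : Mat d →ₗ[ℂ] Mat d) : Prop :=
  ∃ (n : ℕ) (K : Fin n → Mat d), IsKrausRep Φ K

/-- A density matrix: positive semidefinite with unit trace. -/
def IsDensity {d : ℕ} (ρ : Mat d) : Prop := ρ.PosSemidef ∧ ρ.trace = 1

/-- Ergodicity: the channel has a unique fixed point density matrix. -/
def IsErgodic {d : ℕ} (Φ : Mat d →ₗ[ℂ] Mat d) : Prop :=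
  ∃! ρ : Mat d, IsDensity ρ ∧ Φ ρ = ρ

/-- The support of an operator, viewed as a subspace of `ℂ^d`. -/
def supp {d : ℕ} (ρ : Mat d) : Submodule ℂ (Fin d → ℂ) := LinearMap.range ρ.mulVecLin

/-- The positive semidefinite square root of a positive semidefinite matrix
(the definition of the removed `Matrix.PosSemidef.sqrt`). -/
def posSemidefSqrt {d : ℕ} {A : Mat d} (hA : A.PosSemidef) : Mat d :=
  hA.1.eigenvectorUnitary.1 * diagonal ((↑) ∘ (√·) ∘ hA.1.eigenvalues) *
  (star hA.1.eigenvectorUnitary : Mat d)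

/-- The trace norm `‖A‖₁ = Tr √(A†A)`. -/
def traceNorm {d : ℕ} (A : Mat d) : ℝ :=
  ((posSemidefSqrt (Matrix.posSemidef_conjTranspose_mul_self A)).trace).re

/-- Mixing: iterates of the channel converge in trace norm to a unique state. -/
def IsMixing {d : ℕ} (Φ : Mat d →ₗ[ℂ] Mat d) : Prop :=
  ∃ ρs : Mat d, IsDensity ρs ∧ ∀ ρ : Mat d, IsDensity ρ →
    Filter.Tendsto (fun k : ℕ => traceNorm ((Φ ^ k) ρ - ρs)) Filter.atTop (nhds 0)

/-- A subspace `S` is invariant for a channel if every Kraus operator (of any Kraus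
representation) maps `S` into itself. -/
def IsInvariantSubspace {d : ℕ} (Φ : Mat d →ₗ[ℂ] Mat d) (S : Submodule ℂ (Fin d → ℂ)) : Prop :=
  ∀ (n : ℕ) (K : Fin n → Mat d), IsKrausRep Φ K → ∀ i, ∀ x ∈ S, (K i).mulVec x ∈ S

/-!
Write `Ψ = p Φ + (1 - p) Φ'`. A positive fixed point `η` of `Ψ` satisfies `Φ η ≤ p⁻¹ η`, so the
adjoints of the Kraus operators of `Φ` map `ker η` into itself and `Φ` maps the matrices supported
on the support of `η` into themselves. There `Φ` has a fixed state: a trace-preserving map has a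
nonzero fixed point, and the positive and negative parts of a Hermitian fixed point of a positive
trace-preserving map are fixed again (minimality of the Jordan decomposition). By ergodicity that
state is `ρ*`, so `ker η ⊆ ker ρ*`. Two distinct fixed states `ρ₁, ρ₂` of `Ψ` would give the fixed
points `(ρ₁ - ρ₂)⁺` and `(ρ₁ - ρ₂)⁻`, whose supports are orthogonal yet both contain the support of
`ρ* ≠ 0`. For the fixed state `ρ_p`, `ker ρ_p ⊆ ker ρ*` gives `c ρ* ≤ ρ_p` for some `c > 0`, which
is the claimed decomposition.
-/

open scoped MatrixOrder

theorem LinearMap.exists_ne_zero_apply_eq_self {K V : Type*} [Field K] [AddCommGroup V]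
    [Module K V] [FiniteDimensional K V] (f : V →ₗ[K] V) {τ : V →ₗ[K] K} (hτ : τ ∘ₗ f = τ)
    (hτ0 : τ ≠ 0) : ∃ v, v ≠ 0 ∧ f v = v := by
  by_contra! h
  have hinj : Function.Injective (f - LinearMap.id : V →ₗ[K] V) := by
    refine (injective_iff_map_eq_zero (f - LinearMap.id : V →ₗ[K] V)).mpr fun v hv => ?_
    by_contra hv0
    exact h v hv0 (sub_eq_zero.mp hv)
  apply hτ0
  ext x
  obtain ⟨y, rfl⟩ := LinearMap.injective_iff_surjective.mp hinj x
  simp [← LinearMap.comp_apply, hτ]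

namespace Matrix

variable {n : Type*} [Fintype n]

/-- For Hermitian `η` these are the matrices `A` with `A = P A P`, where `P` is the projection
onto the support of `η`. -/
def supportedOn (η : Matrix n n ℂ) : Submodule ℂ (Matrix n n ℂ) where
  carrier := {A | ∀ v, η *ᵥ v = 0 → A *ᵥ v = 0 ∧ Aᴴ *ᵥ v = 0}
  add_mem' ha hb v hv := ⟨by rw [add_mulVec, (ha v hv).1, (hb v hv).1, add_zero],
    by rw [conjTranspose_add, add_mulVec, (ha v hv).2, (hb v hv).2, add_zero]⟩
  zero_mem' v _ := by simp
  smul_mem' c A ha v hv := ⟨by rw [smul_mulVec, (ha v hv).1, smul_zero],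
    by rw [conjTranspose_smul, smul_mulVec, (ha v hv).2, smul_zero]⟩

lemma mem_supportedOn {η A : Matrix n n ℂ} :
    A ∈ supportedOn η ↔ ∀ v, η *ᵥ v = 0 → A *ᵥ v = 0 ∧ Aᴴ *ᵥ v = 0 :=
  Iff.rfl

lemma mem_supportedOn_of_isSelfAdjoint {η A : Matrix n n ℂ} (hA : IsSelfAdjoint A)
    (hker : ∀ v, η *ᵥ v = 0 → A *ᵥ v = 0) : A ∈ supportedOn η :=
  fun v hv => ⟨hker v hv, by rw [show Aᴴ = A from hA]; exact hker v hv⟩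

lemma conjTranspose_mem_supportedOn {η A : Matrix n n ℂ} (hA : A ∈ supportedOn η) :
    Aᴴ ∈ supportedOn η :=
  fun v hv => ⟨(hA v hv).2, by rw [conjTranspose_conjTranspose]; exact (hA v hv).1⟩

variable [DecidableEq n]

lemma continuousOn_spectrum (A : Matrix n n ℂ) (f : ℝ → ℝ) : ContinuousOn f (spectrum ℝ A) :=
  A.finite_real_spectrum.continuousOn f

lemma mul_eq_zero_of_ker_le {X Y Z : Matrix n n ℂ} (hker : ∀ v, X *ᵥ v = 0 → Y *ᵥ v = 0)
    (h : X * Z = 0) : Y * Z = 0 := by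
  refine ext_of_mulVec_single fun i => ?_
  rw [← mulVec_mulVec, zero_mulVec]
  exact hker _ (by rw [mulVec_mulVec, h, zero_mulVec])

lemma mul_eq_zero_of_star_mul_mul_eq_zero {B Q : Matrix n n ℂ} (hB : 0 ≤ B)
    (h : star Q * B * Q = 0) : B * Q = 0 := by
  obtain ⟨X, rfl⟩ := CStarAlgebra.nonneg_iff_eq_star_mul_self.mp hB
  have hXQ : X * Q = 0 := by
    rw [← conjTranspose_mul_self_eq_zero, ← h, conjTranspose_mul]
    simp only [star_eq_conjTranspose, Matrix.mul_assoc]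
  rw [Matrix.mul_assoc, hXQ, Matrix.mul_zero]

def posProj (A : Matrix n n ℂ) : Matrix n n ℂ :=
  cfc (fun x : ℝ => if 0 < x then (1 : ℝ) else 0) A

lemma isSelfAdjoint_posProj (A : Matrix n n ℂ) : IsSelfAdjoint (posProj A) :=
  cfc_predicate _ A

lemma posProj_mul_self (A : Matrix n n ℂ) : posProj A * posProj A = posProj A := by
  rw [posProj, ← cfc_mul _ _ A (continuousOn_spectrum A _) (continuousOn_spectrum A _)]
  exact cfc_congr fun x _ => by split_ifs <;> simp

lemma posProj_mul_eq_cfc {A : Matrix n n ℂ} (hA : IsSelfAdjoint A) :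
    posProj A * A = cfc (fun x => (if 0 < x then (1 : ℝ) else 0) * x) A := by
  rw [cfc_mul _ _ A (continuousOn_spectrum A _) (continuousOn_spectrum A _), cfc_id' ℝ A hA]
  rfl

lemma posProj_mul_eq_posPart {A : Matrix n n ℂ} (hA : IsSelfAdjoint A) : posProj A * A = A⁺ := by
  rw [posProj_mul_eq_cfc hA, CFC.posPart_def, cfcₙ_eq_cfc]
  refine cfc_congr fun x _ => ?_
  rcases lt_or_ge 0 x with h | h
  · simp [h, h.le]
  · simp [h.not_gt, posPart_eq_zero.mpr h]

lemma posProj_mul_mul_posProj {A : Matrix n n ℂ} (hA : IsSelfAdjoint A) :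
    posProj A * A * posProj A = A⁺ := by
  rw [posProj_mul_eq_cfc hA, posProj, ← cfc_mul _ _ A (continuousOn_spectrum A _)
    (continuousOn_spectrum A _), CFC.posPart_def, cfcₙ_eq_cfc]
  refine cfc_congr fun x _ => ?_
  rcases lt_or_ge 0 x with h | h
  · simp [h, h.le]
  · simp [h.not_gt, posPart_eq_zero.mpr h]

lemma mul_posProj_of_nonneg {A : Matrix n n ℂ} (hA : 0 ≤ A) : A * posProj A = A := by
  have hPA : posProj A * A = A := by
    rw [posProj_mul_eq_cfc (.of_nonneg hA)]
    conv_rhs => rw [← cfc_id' ℝ A]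
    refine cfc_congr fun x hx => ?_
    rcases (spectrum_nonneg_of_nonneg hA hx).lt_or_eq with h | h
    · simp [h]
    · simp [← h]
  simpa [(isSelfAdjoint_posProj A).star_eq, (IsSelfAdjoint.of_nonneg hA).star_eq] using
    congrArg star hPA

lemma exists_pos_smul_posProj_le {A : Matrix n n ℂ} (hA : 0 ≤ A) :
    ∃ ε : ℝ, 0 < ε ∧ ε • posProj A ≤ A := by
  have hfin : (spectrum ℝ A ∩ Set.Ioi 0).Finite := A.finite_real_spectrum.inter_of_left _
  -- `ε` separates `0` from the finitely many positive points of the spectrum.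
  obtain ⟨ε, hε, hball⟩ := Metric.isOpen_iff.mp hfin.isClosed.isOpen_compl 0 (by simp)
  refine ⟨ε, hε, ?_⟩
  rw [posProj, ← cfc_smul ε _ A (continuousOn_spectrum A _)]
  conv_rhs => rw [← cfc_id' ℝ A]
  refine cfc_mono (fun x hx => ?_) (continuousOn_spectrum A _) (continuousOn_spectrum A _)
  split_ifs with h
  · have : x ∉ Metric.ball 0 ε := fun hx' => hball hx' ⟨hx, h⟩
    simpa [abs_of_pos h] using this
  · simpa using spectrum_nonneg_of_nonneg hA hx

lemma exists_le_smul_one {A : Matrix n n ℂ} (hA : IsSelfAdjoint A) :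
    ∃ M : ℝ, 0 < M ∧ A ≤ M • 1 := by
  obtain ⟨M, hM⟩ := A.finite_real_spectrum.bddAbove
  refine ⟨max M 1, by positivity, ?_⟩
  rw [← Algebra.algebraMap_eq_smul_one]
  exact le_algebraMap_of_spectrum_le (fun x hx => (hM hx).trans (le_max_left M 1)) hA

theorem exists_pos_smul_le_of_ker_le {η ρ : Matrix n n ℂ} (hη : 0 ≤ η) (hρ : 0 ≤ ρ)
    (hker : ∀ v, η *ᵥ v = 0 → ρ *ᵥ v = 0) : ∃ c : ℝ, 0 < c ∧ c • ρ ≤ η := by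
  set P := posProj η
  have hPs : star P = P := isSelfAdjoint_posProj η
  obtain ⟨ε, hε, hεP⟩ := exists_pos_smul_posProj_le hη
  obtain ⟨M, hM, hρM⟩ := exists_le_smul_one (IsSelfAdjoint.of_nonneg hρ)
  have hρP : ρ * P = ρ := by
    have h := mul_eq_zero_of_ker_le hker (Z := 1 - P) (by
      rw [Matrix.mul_sub, Matrix.mul_one, mul_posProj_of_nonneg hη, sub_self])
    rwa [Matrix.mul_sub, Matrix.mul_one, sub_eq_zero, eq_comm] at h
  have hPρ : P * ρ = ρ := by
    simpa [hPs, (IsSelfAdjoint.of_nonneg hρ).star_eq] using congrArg star hρP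
  have hρle : ρ ≤ M • P := calc
    ρ = P * ρ * P := by rw [hPρ, hρP]
    _ ≤ P * (M • 1) * P := (isSelfAdjoint_posProj η).conjugate_le_conjugate hρM
    _ = M • P := by rw [Matrix.mul_smul, Matrix.mul_one, Matrix.smul_mul, posProj_mul_self]
  refine ⟨ε / M, div_pos hε hM, ?_⟩
  calc (ε / M) • ρ ≤ (ε / M) • (M • P) := smul_le_smul_of_nonneg_left hρle (by positivity)
    _ = ε • P := by rw [smul_smul, div_mul_cancel₀ _ hM.ne']
    _ ≤ η := hεP

theorem eq_posPart_of_sub_eq {A B C : Matrix n n ℂ} (hA : IsSelfAdjoint A) (hB : 0 ≤ B)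
    (hC : 0 ≤ C) (hBC : B - C = A) (htr : B.trace = A⁺.trace) : B = A⁺ := by
  set P := posProj A
  set Q := 1 - P
  have hP : IsSelfAdjoint P := isSelfAdjoint_posProj A
  have hQ : IsSelfAdjoint Q := (IsSelfAdjoint.one _).sub hP
  have hPP : P * P = P := posProj_mul_self A
  have hQQ : Q * Q = Q := by
    simp only [Q, Matrix.sub_mul, Matrix.mul_sub, Matrix.one_mul, Matrix.mul_one, hPP, sub_self,
      sub_zero]
  have hPBP : P * B * P = A⁺ + P * C * P := by
    rw [← posProj_mul_mul_posProj hA, show B = A + C by rw [← hBC, sub_add_cancel],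
      Matrix.mul_add, Matrix.add_mul]
  have hsplit : B.trace = (P * B * P).trace + (Q * B * Q).trace := by
    rw [trace_mul_cycle P B P, trace_mul_cycle Q B Q, hPP, hQQ, ← trace_add, ← Matrix.add_mul,
      add_sub_cancel, Matrix.one_mul]
  have hPCP : 0 ≤ P * C * P := hP.conjugate_nonneg hC
  have hQBQ : 0 ≤ Q * B * Q := hQ.conjugate_nonneg hB
  -- `tr B = tr A⁺ + tr (P C P) + tr (Q B Q)` forces both nonnegative summands to vanish.
  rw [hPBP, trace_add, htr, add_assoc, left_eq_add] at hsplit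
  obtain ⟨hPCP0, hQBQ0⟩ := (add_eq_zero_iff_of_nonneg hPCP.posSemidef.trace_nonneg
    hQBQ.posSemidef.trace_nonneg).mp hsplit
  have hBQ : B * Q = 0 := mul_eq_zero_of_star_mul_mul_eq_zero hB <| by
    rw [hQ.star_eq]; exact hQBQ.posSemidef.trace_eq_zero_iff.mp hQBQ0
  have hBP : B * P = B := by
    rwa [Matrix.mul_sub, Matrix.mul_one, sub_eq_zero, eq_comm] at hBQ
  have hPB : P * B = B := by
    simpa [hP.star_eq, (IsSelfAdjoint.of_nonneg hB).star_eq] using congrArg star hBP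
  calc B = P * B * P := by rw [hPB, hBP]
    _ = A⁺ := by rw [hPBP, hPCP.posSemidef.trace_eq_zero_iff.mp hPCP0, add_zero]

theorem map_posPart_eq_and_map_negPart_eq {Φ : Matrix n n ℂ →ₗ[ℂ] Matrix n n ℂ}
    (hpos : ∀ A, 0 ≤ A → 0 ≤ Φ A) (htr : ∀ A, (Φ A).trace = A.trace) {A : Matrix n n ℂ}
    (hA : IsSelfAdjoint A) (hfix : Φ A = A) : Φ A⁺ = A⁺ ∧ Φ A⁻ = A⁻ := by
  have hdiff : Φ A⁺ - Φ A⁻ = A := by rw [← map_sub, CFC.posPart_sub_negPart A hA, hfix]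
  have hplus : Φ A⁺ = A⁺ := eq_posPart_of_sub_eq hA (hpos _ (CFC.posPart_nonneg A))
    (hpos _ (CFC.negPart_nonneg A)) hdiff (htr _)
  rw [hplus] at hdiff
  exact ⟨hplus, sub_right_injective (hdiff.trans (CFC.posPart_sub_negPart A hA).symm)⟩

lemma posPart_ne_zero_and_negPart_ne_zero {A : Matrix n n ℂ} (hA : IsSelfAdjoint A)
    (htr : A.trace = 0) (hA0 : A ≠ 0) : A⁺ ≠ 0 ∧ A⁻ ≠ 0 := by
  have hsub := CFC.posPart_sub_negPart A hA
  have htr' : A⁺.trace = A⁻.trace := by rw [← sub_eq_zero, ← trace_sub, hsub, htr]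
  have hpos := (CFC.posPart_nonneg A).posSemidef.trace_eq_zero_iff
  have hneg := (CFC.negPart_nonneg A).posSemidef.trace_eq_zero_iff
  constructor <;> intro h0 <;> apply hA0 <;> rw [← hsub]
  · rw [h0, hneg.mp (by rw [← htr', h0, trace_zero]), sub_zero]
  · rw [h0, hpos.mp (by rw [htr', h0, trace_zero]), sub_zero]

lemma posPart_mem_supportedOn {η A : Matrix n n ℂ} (hA : IsSelfAdjoint A)
    (hAη : A ∈ supportedOn η) : A⁺ ∈ supportedOn η :=
  mem_supportedOn_of_isSelfAdjoint (.of_nonneg (CFC.posPart_nonneg A)) fun v hv => by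
    rw [← posProj_mul_eq_posPart hA, ← mulVec_mulVec, (hAη v hv).1, mulVec_zero]

lemma negPart_mem_supportedOn {η A : Matrix n n ℂ} (hA : IsSelfAdjoint A)
    (hAη : A ∈ supportedOn η) : A⁻ ∈ supportedOn η := by
  rw [eq_sub_of_add_eq (sub_eq_iff_eq_add'.mp (CFC.posPart_sub_negPart A hA)).symm]
  exact sub_mem (posPart_mem_supportedOn hA hAη) hAη

end Matrix

lemma IsDensity.exists_eq_smul_add_smul {d : ℕ} {η ρ : Mat d} (hη : IsDensity η)
    (hρ : IsDensity ρ) {c : ℝ} (hc : c < 1) (hle : c • ρ ≤ η) :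
    ∃ σ, IsDensity σ ∧ η = (c : ℂ) • ρ + ((1 - c : ℝ) : ℂ) • σ := by
  have hc' : 1 - c ≠ 0 := sub_ne_zero.mpr hc.ne'
  refine ⟨(1 - c)⁻¹ • (η - c • ρ),
    ⟨(le_iff.mp hle).smul (inv_nonneg.mpr (sub_nonneg.mpr hc.le)), ?_⟩, ?_⟩
  · rw [trace_smul, trace_sub, trace_smul, hη.2, hρ.2, Complex.real_smul, Complex.real_smul,
      mul_one, ← Complex.ofReal_one, ← Complex.ofReal_sub, ← Complex.ofReal_mul,
      inv_mul_cancel₀ hc', Complex.ofReal_one]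
  · rw [Complex.coe_smul, Complex.coe_smul, smul_smul, mul_inv_cancel₀ hc', one_smul,
      add_sub_cancel]

lemma IsDensity.ne_zero {d : ℕ} {ρ : Mat d} (hρ : IsDensity ρ) : ρ ≠ 0 := by
  rintro rfl
  simpa using hρ.2

lemma isDensity_trace_inv_smul {d : ℕ} {Z : Mat d} (hZ : 0 ≤ Z) (hZ0 : Z ≠ 0) :
    IsDensity (Z.trace⁻¹ • Z) := by
  have htr : Z.trace ≠ 0 := mt hZ.posSemidef.trace_eq_zero_iff.mp hZ0
  exact ⟨hZ.posSemidef.smul (inv_nonneg_of_nonneg hZ.posSemidef.trace_nonneg),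
    by rw [trace_smul, smul_eq_mul, inv_mul_cancel₀ htr]⟩

namespace IsCPTP

variable {d : ℕ} {Φ Φ' : Mat d →ₗ[ℂ] Mat d}

lemma map_nonneg (hΦ : IsCPTP Φ) {A : Mat d} (hA : 0 ≤ A) : 0 ≤ Φ A := by
  obtain ⟨n, K, hK, -⟩ := hΦ
  rw [hK]
  exact Finset.sum_nonneg fun i _ => star_right_conjugate_nonneg hA (K i)

lemma trace_map (hΦ : IsCPTP Φ) (A : Mat d) : (Φ A).trace = A.trace := by
  obtain ⟨n, K, hK, hnorm⟩ := hΦ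
  simp_rw [hK, trace_sum, trace_mul_cycle (K _), ← trace_sum, ← Finset.sum_mul, hnorm,
    Matrix.one_mul]

lemma map_conjTranspose (hΦ : IsCPTP Φ) (A : Mat d) : Φ Aᴴ = (Φ A)ᴴ := by
  obtain ⟨n, K, hK, -⟩ := hΦ
  simp [hK, conjTranspose_sum, Matrix.mul_assoc]

lemma smul_add_smul (hΦ : IsCPTP Φ) (hΦ' : IsCPTP Φ') {p : ℝ} (hp : 0 ≤ p) (hp1 : p ≤ 1) :
    IsCPTP ((p : ℂ) • Φ + ((1 - p : ℝ) : ℂ) • Φ') := by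
  obtain ⟨n, K, hK, hKn⟩ := hΦ
  obtain ⟨m, L, hL, hLn⟩ := hΦ'
  have hsq : ∀ c : ℝ, 0 ≤ c → star (√c : ℂ) * (√c : ℂ) = c := fun c hc => by
    rw [Complex.star_def, Complex.conj_ofReal, ← Complex.ofReal_mul, Real.mul_self_sqrt hc]
  refine ⟨n + m, Fin.append (fun i => (√p : ℂ) • K i) (fun j => (√(1 - p) : ℂ) • L j),
    fun A => ?_, ?_⟩
  · simp only [Fin.sum_univ_add, Fin.append_left, Fin.append_right, LinearMap.add_apply,
      LinearMap.smul_apply, hK, hL, Finset.smul_sum, conjTranspose_smul, Matrix.smul_mul,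
      Matrix.mul_smul, smul_smul, hsq p hp, hsq (1 - p) (sub_nonneg.mpr hp1)]
  · simp only [Fin.sum_univ_add, Fin.append_left, Fin.append_right, conjTranspose_smul,
      Matrix.smul_mul, Matrix.mul_smul, smul_smul, ← Finset.smul_sum, hKn, hLn, ← add_smul]
    rw [mul_comm, hsq p hp, mul_comm, hsq (1 - p) (sub_nonneg.mpr hp1), ← Complex.ofReal_add,
      add_sub_cancel, Complex.ofReal_one, one_smul]

lemma map_le_inv_smul_of_fixed (hΦ' : IsCPTP Φ') {p : ℝ} (hp : 0 < p) (hp1 : p ≤ 1) {η : Mat d}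
    (hη : 0 ≤ η) (hfix : ((p : ℂ) • Φ + ((1 - p : ℝ) : ℂ) • Φ') η = η) : Φ η ≤ p⁻¹ • η := by
  rw [LinearMap.add_apply, LinearMap.smul_apply, LinearMap.smul_apply, Complex.coe_smul,
    Complex.coe_smul] at hfix
  have hle : p • Φ η ≤ η := sub_nonneg.mp <| eq_sub_of_add_eq' hfix ▸
    smul_nonneg (sub_nonneg.mpr hp1) (hΦ'.map_nonneg hη)
  calc Φ η = p⁻¹ • p • Φ η := by rw [smul_smul, inv_mul_cancel₀ hp.ne', one_smul]
    _ ≤ p⁻¹ • η := smul_le_smul_of_nonneg_left hle (inv_nonneg.mpr hp.le)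

lemma _root_.IsKrausRep.mulVec_conjTranspose_eq_zero {n : ℕ} {K : Fin n → Mat d}
    (hK : IsKrausRep Φ K) {η : Mat d} (hη : 0 ≤ η) {c : ℝ} (hle : Φ η ≤ c • η)
    {v : Fin d → ℂ} (hv : η *ᵥ v = 0) (i : Fin n) : η *ᵥ ((K i)ᴴ *ᵥ v) = 0 := by
  set q : Fin n → ℂ := fun i => star ((K i)ᴴ *ᵥ v) ⬝ᵥ η *ᵥ ((K i)ᴴ *ᵥ v)
  have hq : ∀ i, 0 ≤ q i := fun i => hη.posSemidef.dotProduct_mulVec_nonneg _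
  have hsum : star v ⬝ᵥ Φ η *ᵥ v = ∑ i, q i := by
    rw [hK.1, sum_mulVec, dotProduct_sum]
    refine Finset.sum_congr rfl fun i _ => ?_
    change _ = star ((K i)ᴴ *ᵥ v) ⬝ᵥ η *ᵥ ((K i)ᴴ *ᵥ v)
    rw [star_mulVec, conjTranspose_conjTranspose, ← dotProduct_mulVec, mulVec_mulVec,
      mulVec_mulVec]
  have hnonpos : star v ⬝ᵥ Φ η *ᵥ v ≤ 0 := by
    have := (le_iff.mp hle).dotProduct_mulVec_nonneg v
    rwa [sub_mulVec, dotProduct_sub, smul_mulVec, hv, smul_zero, dotProduct_zero, zero_sub,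
      neg_nonneg] at this
  have hzero : ∑ i, q i = 0 := le_antisymm (hsum ▸ hnonpos) (Finset.sum_nonneg fun i _ => hq i)
  exact (hη.posSemidef.dotProduct_mulVec_zero_iff _).mp <|
    (Finset.sum_eq_zero_iff_of_nonneg fun i _ => hq i).mp hzero i (Finset.mem_univ i)

lemma map_mem_supportedOn (hΦ : IsCPTP Φ) {η : Mat d} (hη : 0 ≤ η) {c : ℝ}
    (hle : Φ η ≤ c • η) {A : Mat d} (hA : A ∈ supportedOn η) : Φ A ∈ supportedOn η := by
  obtain ⟨n, K, hK⟩ := id hΦ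
  have hker : ∀ B, (∀ v, η *ᵥ v = 0 → B *ᵥ v = 0) → ∀ v, η *ᵥ v = 0 → Φ B *ᵥ v = 0 := by
    intro B hB v hv
    rw [hK.1, sum_mulVec]
    refine Finset.sum_eq_zero fun i _ => ?_
    rw [← mulVec_mulVec, ← mulVec_mulVec, hB _ (hK.mulVec_conjTranspose_eq_zero hη hle hv i),
      mulVec_zero]
  exact fun v hv => ⟨hker A (fun w hw => (hA w hw).1) v hv,
    hΦ.map_conjTranspose A ▸ hker Aᴴ (fun w hw => (hA w hw).2) v hv⟩

lemma exists_nonneg_fixed_mem_supportedOn (hΦ : IsCPTP Φ) {η Y : Mat d}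
    (hY : Y ∈ supportedOn η) (hY0 : Y ≠ 0) (hfix : Φ Y = Y) :
    ∃ Z ∈ supportedOn η, 0 ≤ Z ∧ Z ≠ 0 ∧ Φ Z = Z := by
  obtain ⟨X, hX, hXs, hX0, hXfix⟩ :
      ∃ X ∈ supportedOn η, IsSelfAdjoint X ∧ X ≠ 0 ∧ Φ X = X := by
    by_cases h : Y + Yᴴ = 0
    · have hYs : Yᴴ = -Y := eq_neg_of_add_eq_zero_right h
      refine ⟨Complex.I • Y, Submodule.smul_mem _ _ hY, ?_, smul_ne_zero Complex.I_ne_zero hY0,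
        by rw [map_smul, hfix]⟩
      change (Complex.I • Y)ᴴ = Complex.I • Y
      rw [conjTranspose_smul, hYs]
      simp
    · exact ⟨Y + Yᴴ, add_mem hY (conjTranspose_mem_supportedOn hY), .add_star_self Y, h,
        by rw [map_add, hΦ.map_conjTranspose, hfix]⟩
  obtain ⟨hfixPos, hfixNeg⟩ :=
    map_posPart_eq_and_map_negPart_eq (fun _ => hΦ.map_nonneg) hΦ.trace_map hXs hXfix
  by_cases hPos : X⁺ = 0
  · refine ⟨X⁻, negPart_mem_supportedOn hXs hX, CFC.negPart_nonneg X, fun hNeg => hX0 ?_,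
      hfixNeg⟩
    rw [← CFC.posPart_sub_negPart X hXs, hPos, hNeg, sub_zero]
  · exact ⟨X⁺, posPart_mem_supportedOn hXs hX, CFC.posPart_nonneg X, hPos, hfixPos⟩

theorem exists_isDensity_fixed_mem_supportedOn (hΦ : IsCPTP Φ) {η : Mat d} (hη : 0 ≤ η)
    (hη0 : η ≠ 0) (hinv : ∀ A ∈ supportedOn η, Φ A ∈ supportedOn η) :
    ∃ ω ∈ supportedOn η, IsDensity ω ∧ Φ ω = ω := by
  set V := supportedOn η
  set τ := traceLinearMap (Fin d) ℂ ℂ ∘ₗ V.subtype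
  have hτ : τ ∘ₗ Φ.restrict hinv = τ := by
    ext Y
    exact hΦ.trace_map Y
  have hτ0 : τ ≠ 0 := fun h => mt hη.posSemidef.trace_eq_zero_iff.mp hη0 <|
    LinearMap.congr_fun h ⟨η, mem_supportedOn_of_isSelfAdjoint (.of_nonneg hη) fun _ => id⟩
  obtain ⟨Y, hY0, hYfix⟩ := (Φ.restrict hinv).exists_ne_zero_apply_eq_self hτ hτ0
  obtain ⟨Z, hZV, hZ, hZ0, hZfix⟩ := hΦ.exists_nonneg_fixed_mem_supportedOn Y.2
    (by simpa using hY0) (congrArg Subtype.val hYfix)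
  exact ⟨Z.trace⁻¹ • Z, V.smul_mem _ hZV, isDensity_trace_inv_smul hZ hZ0,
    by rw [map_smul, hZfix]⟩

theorem exists_isDensity_fixed [NeZero d] (hΦ : IsCPTP Φ) : ∃ ω, IsDensity ω ∧ Φ ω = ω := by
  obtain ⟨ω, -, hω⟩ := hΦ.exists_isDensity_fixed_mem_supportedOn PosSemidef.one.nonneg
    one_ne_zero fun A _ => mem_supportedOn.mpr fun v hv => by
      rw [one_mulVec] at hv
      simp [hv]
  exact ⟨ω, hω⟩

theorem _root_.IsErgodic.ker_le (hE : IsErgodic Φ) (hΦ : IsCPTP Φ) {ρ : Mat d}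
    (hρ : IsDensity ρ) (hfix : Φ ρ = ρ) {η : Mat d} (hη : 0 ≤ η) (hη0 : η ≠ 0) {c : ℝ}
    (hle : Φ η ≤ c • η) (v : Fin d → ℂ) (hv : η *ᵥ v = 0) : ρ *ᵥ v = 0 := by
  obtain ⟨ω, hωη, hω, hωfix⟩ := hΦ.exists_isDensity_fixed_mem_supportedOn hη hη0
    fun _ => hΦ.map_mem_supportedOn hη hle
  rw [← hE.unique ⟨hω, hωfix⟩ ⟨hρ, hfix⟩]
  exact (hωη v hv).1

theorem eq_of_isDensity_of_fixed (hΦ : IsCPTP Φ) {ρ : Mat d} (hρ : IsDensity ρ)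
    (hker : ∀ η, 0 ≤ η → η ≠ 0 → Φ η = η → ∀ v, η *ᵥ v = 0 → ρ *ᵥ v = 0)
    {ρ₁ ρ₂ : Mat d} (h₁ : IsDensity ρ₁) (hf₁ : Φ ρ₁ = ρ₁) (h₂ : IsDensity ρ₂)
    (hf₂ : Φ ρ₂ = ρ₂) : ρ₁ = ρ₂ := by
  by_contra hne
  set δ := ρ₁ - ρ₂
  have hδ : IsSelfAdjoint δ := h₁.1.1.sub h₂.1.1
  obtain ⟨hfixPos, hfixNeg⟩ := map_posPart_eq_and_map_negPart_eq (fun _ => hΦ.map_nonneg)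
    hΦ.trace_map hδ (by rw [map_sub, hf₁, hf₂])
  obtain ⟨hPos, hNeg⟩ := posPart_ne_zero_and_negPart_ne_zero hδ
    (by rw [trace_sub, h₁.2, h₂.2, sub_self]) (sub_ne_zero.mpr hne)
  have hρδ : ρ * δ⁻ = 0 := mul_eq_zero_of_ker_le
    (hker _ (CFC.posPart_nonneg δ) hPos hfixPos) (CFC.posPart_mul_negPart δ)
  have hδρ : δ⁻ * ρ = 0 := by
    simpa [(IsSelfAdjoint.of_nonneg (CFC.negPart_nonneg δ)).star_eq, hρ.1.1.isSelfAdjoint.star_eq]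
      using congrArg star hρδ
  have hρρ : ρᴴ * ρ = 0 := by
    rw [hρ.1.1]
    exact mul_eq_zero_of_ker_le (hker _ (CFC.negPart_nonneg δ) hNeg hfixNeg) hδρ
  exact hρ.ne_zero (conjTranspose_mul_self_eq_zero.mp hρρ)

end IsCPTP

/-- Stability of ergodicity under randomization: a convex combination of an ergodic channel
with an arbitrary channel is ergodic, and its fixed point state is a convex combination of the
original fixed point state with some state. -/
theorem ergodic_stable_under_randomization {d : ℕ} (Φ Φ' : Mat d →ₗ[ℂ] Mat d)
    (hΦ : IsCPTP Φ) (hΦ' : IsCPTP Φ') (hE : IsErgodic Φ)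
    (ρs : Mat d) (hρs : IsDensity ρs) (hfix : Φ ρs = ρs)
    (p : ℝ) (hp : 0 < p) (hp1 : p ≤ 1) :
    IsErgodic ((p : ℂ) • Φ + ((1 - p : ℝ) : ℂ) • Φ') ∧
    ∀ ρp : Mat d, IsDensity ρp → ((p : ℂ) • Φ + ((1 - p : ℝ) : ℂ) • Φ') ρp = ρp →
      ∃ π : ℝ, 0 < π ∧ π ≤ 1 ∧ ∃ σ : Mat d, IsDensity σ ∧
        ρp = (π : ℂ) • ρs + ((1 - π : ℝ) : ℂ) • σ := by
  have hΨ := hΦ.smul_add_smul hΦ' hp.le hp1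
  have hker : ∀ η, 0 ≤ η → η ≠ 0 → ((p : ℂ) • Φ + ((1 - p : ℝ) : ℂ) • Φ') η = η →
      ∀ v, η *ᵥ v = 0 → ρs *ᵥ v = 0 := fun η hη hη0 hηfix =>
    hE.ker_le hΦ hρs hfix hη hη0 (IsCPTP.map_le_inv_smul_of_fixed hΦ' hp hp1 hη hηfix)
  refine ⟨?_, fun ρp hρp hfixp => ?_⟩
  · have : NeZero d := ⟨by rintro rfl; exact hρs.ne_zero (Subsingleton.elim _ _)⟩
    obtain ⟨ω, hω, hωfix⟩ := hΨ.exists_isDensity_fixed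
    exact ⟨ω, ⟨hω, hωfix⟩, fun ρ hρ => hΨ.eq_of_isDensity_of_fixed hρs hker hρ.1 hρ.2 hω hωfix⟩
  · obtain ⟨c, hc, hle⟩ := exists_pos_smul_le_of_ker_le hρp.1.nonneg hρs.1.nonneg
      (hker ρp hρp.1.nonneg hρp.ne_zero hfixp)
    -- Capping the weight below `1` keeps `1 - π` invertible.
    have hπ : min c (1 / 2) • ρs ≤ ρp :=
      (smul_le_smul_of_nonneg_right (min_le_left _ _) hρs.1.nonneg).trans hle
    obtain ⟨σ, hσ, hdec⟩ := hρp.exists_eq_smul_add_smul hρs (by norm_num) hπ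
    exact ⟨min c (1 / 2), lt_min hc (by norm_num), by norm_num, σ, hσ, hdec⟩
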